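/- Let S_n be the normalized Chebyshev polynomials of the second kind (S_{-1}=0, S_0=1, S_{n+1}=x S_n − S_{n-1}), let z_1 = (x_1^2+x_2^2+1)/(x_1 x_2), and define s_n = S_n(z_1) for n ≥ 0. Then for all n ≥ 0, s_n = x_1^{-n} x_2^{-n} Σ_{q+r ≤ n} C(n-r,q) C(n-q,r) x_1^{2q} x_2^{2r}. -/

import Mathlib

noncomputable section

/-- The ambient field `ℚ(x₁, x₂)` of rational functions in two variables. -/
abbrev Kfield : Type := FractionRing (MvPolynomial (Fin 2) ℚ)

/-- The first indeterminate `x₁`. -/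
def X1 : Kfield := algebraMap (MvPolynomial (Fin 2) ℚ) Kfield (MvPolynomial.X 0)

/-- The second indeterminate `x₂`. -/
def X2 : Kfield := algebraMap (MvPolynomial (Fin 2) ℚ) Kfield (MvPolynomial.X 1)


namespace Stmt10Aux

def cc (m q r : ℕ) : ℕ := (m - r).choose q * (m - q).choose r

lemma cc_zero {m q r : ℕ} (h : m < q + r) : cc m q r = 0 := by
  unfold cc
  rcases le_or_gt r m with hr | hr
  · rw [Nat.choose_eq_zero_of_lt (show m - r < q by omega)]
    simp
  · rw [Nat.choose_eq_zero_of_lt (show m - q < r by omega)]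
    simp

lemma cc_q0 (m s : ℕ) : cc m 0 s = m.choose s := by simp [cc]

lemma cc_r0 (m q : ℕ) : cc m q 0 = m.choose q := by simp [cc]

lemma cc_main (n p s : ℕ) :
    cc (n+2) (p+1) (s+1) + cc n p s
      = cc (n+1) p (s+1) + cc (n+1) (p+1) s + cc (n+1) (p+1) (s+1) := by
  unfold cc
  have e3 : n + 1 - (s+1) = n - s := by omega
  have e4 : n + 1 - (p+1) = n - p := by omega
  have e3' : n + 2 - (s+1) = n + 1 - s := by omega
  have e4' : n + 2 - (p+1) = n + 1 - p := by omega
  rw [e3, e4, e3', e4']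
  rcases le_or_gt s n with hs | hs
  · rcases le_or_gt p n with hp | hp
    · have e5 : n + 1 - s = (n - s) + 1 := by omega
      have e6 : n + 1 - p = (n - p) + 1 := by omega
      rw [e5, e6, Nat.choose_succ_succ (n - s) p, Nat.choose_succ_succ (n - p) s]
      ring
    · have c1 : (n - s).choose p = 0 := Nat.choose_eq_zero_of_lt (by omega)
      have c2 : (n + 1 - s).choose (p+1) = 0 := Nat.choose_eq_zero_of_lt (by omega)
      have c3 : (n - s).choose (p+1) = 0 := Nat.choose_eq_zero_of_lt (by omega)
      rw [c1, c2, c3]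
      simp
  · have z1 : n - s = 0 := by omega
    have z2 : n + 1 - s = 0 := by omega
    rw [z1, z2]
    have c1 : Nat.choose 0 (p+1) = 0 := Nat.choose_eq_zero_of_lt (by omega)
    have c2 : (n - p).choose s = 0 := Nat.choose_eq_zero_of_lt (by omega)
    have c3 : (n + 1 - p).choose (s+1) = 0 := Nat.choose_eq_zero_of_lt (by omega)
    have c4 : (n - p).choose (s+1) = 0 := Nat.choose_eq_zero_of_lt (by omega)
    have c5 : Nat.choose 0 p = (if p = 0 then 1 else 0) := by
      rcases p with _ | p' <;> simp [Nat.choose_eq_zero_of_lt (Nat.succ_pos _)]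
    rw [c1, c2, c3, c4]
    simp

lemma cc_rec (n q r : ℕ) :
    cc (n+2) q r + (if q = 0 ∨ r = 0 then 0 else cc n (q-1) (r-1))
      = (if q = 0 then 0 else cc (n+1) (q-1) r)
        + (if r = 0 then 0 else cc (n+1) q (r-1)) + cc (n+1) q r := by
  rcases q with _ | p <;> rcases r with _ | s
  · simp [cc_q0]
  · simp only [true_or, if_pos rfl, Nat.succ_ne_zero, if_pos, if_neg, Nat.succ_sub_one,
      cc_q0, reduceIte]
    have : (n+2).choose (s+1) = (n+1).choose s + (n+1).choose (s+1) :=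
      Nat.choose_succ_succ (n+1) s
    omega
  · simp only [or_true, if_pos rfl, Nat.succ_ne_zero, if_neg, Nat.succ_sub_one,
      cc_r0, reduceIte]
    have : (n+2).choose (p+1) = (n+1).choose p + (n+1).choose (p+1) :=
      Nat.choose_succ_succ (n+1) p
    omega
  · have hc : ¬ (p + 1 = 0 ∨ s + 1 = 0) := by omega
    simp only [if_neg hc, if_neg (Nat.succ_ne_zero p), if_neg (Nat.succ_ne_zero s),
      Nat.succ_sub_one]
    linarith [cc_main n p s]


lemma shift1 {R : Type*} [CommRing R] (N : ℕ) (f g : ℕ → R)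
    (hf : f N = 0) (hg0 : g 0 = 0) (hgs : ∀ i, g (i+1) = f i) (U : R) :
    U * ∑ i ∈ Finset.range (N+1), f i * U^i
      = ∑ i ∈ Finset.range (N+1), g i * U^i := by
  rw [Finset.sum_range_succ' (fun i => g i * U^i) N]
  rw [Finset.mul_sum, Finset.sum_range_succ]
  simp only [hf, hg0, zero_mul, mul_zero, add_zero, hgs]
  refine Finset.sum_congr rfl fun i _ => ?_
  ring

lemma shiftU2 {R : Type*} [CommRing R] (N : ℕ) (f g : ℕ → ℕ → R)
    (hf : ∀ r, f N r = 0) (hg0 : ∀ r, g 0 r = 0) (hgs : ∀ q r, g (q+1) r = f q r)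
    (U V : R) :
    U * ∑ q ∈ Finset.range (N+1), ∑ r ∈ Finset.range (N+1), f q r * U^q * V^r
      = ∑ q ∈ Finset.range (N+1), ∑ r ∈ Finset.range (N+1), g q r * U^q * V^r := by
  have h1 : ∀ (h : ℕ → ℕ → R) (q : ℕ),
      (∑ r ∈ Finset.range (N+1), h q r * U^q * V^r)
        = (∑ r ∈ Finset.range (N+1), h q r * V^r) * U^q := by
    intro h q
    rw [Finset.sum_mul]
    exact Finset.sum_congr rfl fun r _ => by ring
  calc U * ∑ q ∈ Finset.range (N+1), ∑ r ∈ Finset.range (N+1), f q r * U^q * V^r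
      = U * ∑ q ∈ Finset.range (N+1), (∑ r ∈ Finset.range (N+1), f q r * V^r) * U^q := by
        simp only [h1]
    _ = ∑ q ∈ Finset.range (N+1), (∑ r ∈ Finset.range (N+1), g q r * V^r) * U^q := by
        refine shift1 N _ _ ?_ ?_ ?_ U
        · simp [hf]
        · simp [hg0]
        · intro i; simp [hgs]
    _ = _ := by simp only [h1]

lemma shiftV2 {R : Type*} [CommRing R] (N : ℕ) (f g : ℕ → ℕ → R)
    (hf : ∀ q, f q N = 0) (hg0 : ∀ q, g q 0 = 0) (hgs : ∀ q r, g q (r+1) = f q r)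
    (U V : R) :
    V * ∑ q ∈ Finset.range (N+1), ∑ r ∈ Finset.range (N+1), f q r * U^q * V^r
      = ∑ q ∈ Finset.range (N+1), ∑ r ∈ Finset.range (N+1), g q r * U^q * V^r := by
  rw [Finset.mul_sum]
  refine Finset.sum_congr rfl fun q _ => ?_
  refine shift1 N (fun r => f q r * U^q) (fun r => g q r * U^q) ?_ ?_ ?_ V
  · simp [hf]
  · simp [hg0]
  · intro i; simp [hgs]


lemma big_rec {R : Type*} [CommRing R] (n : ℕ) (U V : R) :
    (∑ q ∈ Finset.range (n+4), ∑ r ∈ Finset.range (n+4), (cc (n+2) q r : R) * U^q * V^r)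
      + U * V * (∑ q ∈ Finset.range (n+4), ∑ r ∈ Finset.range (n+4), (cc n q r : R) * U^q * V^r)
      = (U + V + 1)
        * ∑ q ∈ Finset.range (n+4), ∑ r ∈ Finset.range (n+4), (cc (n+1) q r : R) * U^q * V^r := by
  set gU : ℕ → ℕ → R := fun q r => if q = 0 then 0 else (cc (n+1) (q-1) r : R) with hgU
  set gV : ℕ → ℕ → R := fun q r => if r = 0 then 0 else (cc (n+1) q (r-1) : R) with hgV
  set gW : ℕ → ℕ → R := fun q r => if r = 0 then 0 else (cc n q (r-1) : R) with hgW
  set gUV : ℕ → ℕ → R := fun q r => if q = 0 then 0 else gW (q-1) r with hgUV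
  have hU : U * ∑ q ∈ Finset.range (n+4), ∑ r ∈ Finset.range (n+4),
        (cc (n+1) q r : R) * U^q * V^r
      = ∑ q ∈ Finset.range (n+4), ∑ r ∈ Finset.range (n+4), gU q r * U^q * V^r := by
    refine shiftU2 (n+3) _ _ ?_ ?_ ?_ U V
    · intro r; rw [cc_zero (by omega)]; simp
    · intro r; simp [hgU]
    · intro q r; simp [hgU]
  have hV : V * ∑ q ∈ Finset.range (n+4), ∑ r ∈ Finset.range (n+4),
        (cc (n+1) q r : R) * U^q * V^r
      = ∑ q ∈ Finset.range (n+4), ∑ r ∈ Finset.range (n+4), gV q r * U^q * V^r := by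
    refine shiftV2 (n+3) _ _ ?_ ?_ ?_ U V
    · intro q; rw [cc_zero (by omega)]; simp
    · intro q; simp [hgV]
    · intro q r; simp [hgV]
  have hW : V * ∑ q ∈ Finset.range (n+4), ∑ r ∈ Finset.range (n+4),
        (cc n q r : R) * U^q * V^r
      = ∑ q ∈ Finset.range (n+4), ∑ r ∈ Finset.range (n+4), gW q r * U^q * V^r := by
    refine shiftV2 (n+3) _ _ ?_ ?_ ?_ U V
    · intro q; rw [cc_zero (by omega)]; simp
    · intro q; simp [hgW]
    · intro q r; simp [hgW]
  have hUV : U * (V * ∑ q ∈ Finset.range (n+4), ∑ r ∈ Finset.range (n+4),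
        (cc n q r : R) * U^q * V^r)
      = ∑ q ∈ Finset.range (n+4), ∑ r ∈ Finset.range (n+4), gUV q r * U^q * V^r := by
    rw [hW]
    refine shiftU2 (n+3) _ _ ?_ ?_ ?_ U V
    · intro r
      simp only [hgW]
      split
      · rfl
      · rw [cc_zero (by omega)]; simp
    · intro r; simp [hgUV]
    · intro q r; simp [hgUV]
  rw [add_mul, add_mul, one_mul, hU, hV, mul_assoc, hUV]
  simp only [← Finset.sum_add_distrib]
  refine Finset.sum_congr rfl fun q _ => Finset.sum_congr rfl fun r _ => ?_
  have hcoef : (cc (n+2) q r : R) + gUV q r = gU q r + gV q r + cc (n+1) q r := by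
    have h := cc_rec n q r
    simp only [hgU, hgV, hgW, hgUV]
    rcases q with _ | q' <;> rcases r with _ | r' <;>
      simp only [if_pos rfl, if_neg (Nat.succ_ne_zero _), Nat.succ_ne_zero, true_or, or_true,
        false_or, or_false, if_true, if_false, Nat.succ_sub_one, ite_true, ite_false] at h ⊢ <;>
      · have h2 := congrArg (Nat.cast : ℕ → R) h
        push_cast at h2
        linear_combination h2
  linear_combination hcoef * (U^q * V^r)

lemma pad {R : Type*} [CommRing R] {m M : ℕ} (h : m + 1 ≤ M) (U V : R) :
    ∑ q ∈ Finset.range (m+1), ∑ r ∈ Finset.range (m+1-q), (cc m q r : R) * U^q * V^r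
      = ∑ q ∈ Finset.range M, ∑ r ∈ Finset.range M, (cc m q r : R) * U^q * V^r := by
  rw [Finset.sum_subset (Finset.range_subset_range.2 h)]
  · refine Finset.sum_congr rfl fun q hq => ?_
    rw [Finset.sum_subset (Finset.range_subset_range.2 (show m+1-q ≤ M by omega))]
    intro r hr hr'
    rw [cc_zero (by simp only [Finset.mem_range] at hq hr hr' ⊢; omega)]
    simp
  · intro q hq hq'
    refine Finset.sum_eq_zero fun r _ => ?_
    rw [cc_zero (by simp only [Finset.mem_range] at hq hq'; omega)]
    simp

end Stmt10Aux

open Stmt10Aux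

/-- Let `s_n = S_n(z₁)` where `S_n` are the normalized Chebyshev polynomials of the
second kind (so `s₀ = 1`, `s₁ = z₁`, `s_{n+2} = z₁ s_{n+1} − s_n`) and
`z₁ = (x₁² + x₂² + 1)/(x₁ x₂)`. Then
`s_n = x₁^{-n} x₂^{-n} ∑_{q+r ≤ n} C(n-r,q) C(n-q,r) x₁^{2q} x₂^{2r}` for all `n ≥ 0`. -/
theorem stmt10 (z1 : Kfield) (hz : z1 = (X1 ^ 2 + X2 ^ 2 + 1) / (X1 * X2))
    (s : ℕ → Kfield) (h0 : s 0 = 1) (h1 : s 1 = z1)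
    (hrec : ∀ n : ℕ, s (n + 2) = z1 * s (n + 1) - s n) :
    ∀ n : ℕ, s n = X1 ^ (-(n : ℤ)) * X2 ^ (-(n : ℤ)) *
      ∑ q ∈ Finset.range (n + 1), ∑ r ∈ Finset.range (n + 1 - q),
        (((n - r).choose q * (n - q).choose r : ℕ) : Kfield) * X1 ^ (2 * q) * X2 ^ (2 * r) := by
  have hX1 : X1 ≠ 0 := by
    simpa [X1] using
      (map_ne_zero_iff _ (IsFractionRing.injective (MvPolynomial (Fin 2) ℚ) Kfield)).2
        (MvPolynomial.X_ne_zero (0 : Fin 2))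
  have hX2 : X2 ≠ 0 := by
    simpa [X2] using
      (map_ne_zero_iff _ (IsFractionRing.injective (MvPolynomial (Fin 2) ℚ) Kfield)).2
        (MvPolynomial.X_ne_zero (1 : Fin 2))
  have hX12 : X1 * X2 ≠ 0 := mul_ne_zero hX1 hX2
  have hz1' : z1 * (X1 * X2) = X1^2 + X2^2 + 1 := by
    rw [hz, div_mul_cancel₀ _ hX12]
  set T : ℕ → Kfield := fun m =>
    ∑ q ∈ Finset.range (m+1), ∑ r ∈ Finset.range (m+1-q),
      (cc m q r : Kfield) * (X1^2)^q * (X2^2)^r with hT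
  have key : ∀ m : ℕ, s m * (X1*X2)^m = T m ∧ s (m+1) * (X1*X2)^(m+1) = T (m+1) := by
    intro m
    induction m with
    | zero =>
      constructor
      · simp [hT, h0, cc]
      · have : T 1 = 1 + X2^2 + X1^2 := by
          simp [hT, Finset.sum_range_succ, cc]
        rw [this, h1, pow_one, hz1']
        ring
    | succ k ih =>
      refine ⟨ih.2, ?_⟩
      have e : s (k+2) * (X1*X2)^(k+2)
          = (X1^2 + X2^2 + 1) * (s (k+1) * (X1*X2)^(k+1))
            - (X1^2) * (X2^2) * (s k * (X1*X2)^k) := by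
        rw [hrec k, ← hz1']
        ring
      rw [e, ih.1, ih.2]
      simp only [hT]
      rw [show k+1+1 = k+2 from rfl]
      rw [pad (show k+1 ≤ k+4 by omega) (X1^2) (X2^2),
        pad (show (k+1)+1 ≤ k+4 by omega) (X1^2) (X2^2),
        pad (show (k+2)+1 ≤ k+4 by omega) (X1^2) (X2^2)]
      linear_combination - big_rec k (X1^2) (X2^2)
  intro n
  have hk := (key n).1
  have hpow : (X1*X2)^n ≠ 0 := pow_ne_zero _ hX12
  have hfin : s n = T n * ((X1*X2)^n)⁻¹ := by
    rw [eq_mul_inv_iff_mul_eq₀ hpow]; exact hk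
  rw [hfin]
  simp only [hT, cc, pow_mul]
  rw [zpow_neg, zpow_neg, zpow_natCast, zpow_natCast, mul_pow, mul_inv]
  ring
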